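/- arXiv:2605.25280 — 4 statements merged into one kernel-verified Lean document; each statement's English description precedes it below -/
import Mathlib

section
/- Let A, B ⊂ ℝ be finite nonempty point sets and let T := {b − a : a ∈ A, b ∈ B}. Then there exists t ∈ T such that CD(A+t, B) = CDuT(A, B); i.e., the finite candidate set T contains an optimal translation for the one-dimensional Chamfer distance under translation. -/
open Finset
open scoped Classical

/-- Chamfer distance from finset `A` to finset `B` in `ℝ`:
`CD(A,B) = Σ_{a∈A} min_{b∈B} |a−b|`. -/
noncomputable def CD (A B : Finset ℝ) : ℝ :=
  ∑ a ∈ A, Metric.infDist a (B : Set ℝ)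

/-- The translate `A + t = {a + t : a ∈ A}`. -/
noncomputable def shiftSet (A : Finset ℝ) (t : ℝ) : Finset ℝ :=
  A.image (· + t)

/-- Chamfer distance under translation: `CDuT(A,B) = inf_{t∈ℝ} CD(A+t,B)`. -/
noncomputable def CDuT (A B : Finset ℝ) : ℝ :=
  ⨅ t : ℝ, CD (shiftSet A t) B

/-- A sum of absolute deviations `∑ |s - c x|` attains its minimum at one of the
points `c a`. -/
lemma median_exists (A : Finset ℝ) (hA : A.Nonempty) (c : ℝ → ℝ) (s : ℝ) :
    ∃ a ∈ A, ∑ x ∈ A, |c a - c x| ≤ ∑ x ∈ A, |s - c x| := by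
  classical
  set S : Finset ℝ := A.image c with hS
  have hSne : S.Nonempty := hA.image c
  by_cases h1 : s ≤ S.min' hSne
  · obtain ⟨a, haA, hca⟩ := Finset.mem_image.mp (S.min'_mem hSne)
    refine ⟨a, haA, Finset.sum_le_sum fun x hx => ?_⟩
    have hx1 : c a ≤ c x := hca ▸ S.min'_le _ (Finset.mem_image_of_mem c hx)
    have hx2 : s ≤ c a := hca ▸ h1
    rw [abs_of_nonpos (by linarith), abs_of_nonpos (by linarith)]; linarith
  · by_cases h2 : S.max' hSne ≤ s
    · obtain ⟨a, haA, hca⟩ := Finset.mem_image.mp (S.max'_mem hSne)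
      refine ⟨a, haA, Finset.sum_le_sum fun x hx => ?_⟩
      have hx1 : c x ≤ c a := hca ▸ S.le_max' _ (Finset.mem_image_of_mem c hx)
      have hx2 : c a ≤ s := hca ▸ h2
      rw [abs_of_nonneg (by linarith), abs_of_nonneg (by linarith)]; linarith
    · push_neg at h1 h2
      set L : Finset ℝ := S.filter (· ≤ s) with hL
      set R : Finset ℝ := S.filter (s ≤ ·) with hR
      have hLne : L.Nonempty :=
        ⟨S.min' hSne, Finset.mem_filter.mpr ⟨S.min'_mem hSne, le_of_lt h1⟩⟩
      have hRne : R.Nonempty :=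
        ⟨S.max' hSne, Finset.mem_filter.mpr ⟨S.max'_mem hSne, le_of_lt h2⟩⟩
      set l : ℝ := L.max' hLne with hl
      set r : ℝ := R.min' hRne with hr
      have hlS : l ∈ S := (Finset.mem_filter.mp (L.max'_mem hLne)).1
      have hrS : r ∈ S := (Finset.mem_filter.mp (R.min'_mem hRne)).1
      have hls : l ≤ s := (Finset.mem_filter.mp (L.max'_mem hLne)).2
      have hsr : s ≤ r := (Finset.mem_filter.mp (R.min'_mem hRne)).2
      have hgap : ∀ y ∈ S, y ≤ l ∨ r ≤ y := by
        intro y hy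
        rcases le_total y s with hys | hsy
        · exact Or.inl (L.le_max' y (Finset.mem_filter.mpr ⟨hy, hys⟩))
        · exact Or.inr (R.min'_le y (Finset.mem_filter.mpr ⟨hy, hsy⟩))
      rcases eq_or_lt_of_le (hls.trans hsr) with heq | hlr
      · -- l = r, so s = l ∈ S
        have hsl : s = l := by rw [heq] at hls; linarith
        obtain ⟨a, haA, hca⟩ := Finset.mem_image.mp hlS
        exact ⟨a, haA, le_of_eq (by rw [hca, hsl])⟩
      · -- per-term convexity identity
        have hterm : ∀ x ∈ A,
            (r - l) * |s - c x| = (r - s) * |l - c x| + (s - l) * |r - c x| := by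
          intro x hx
          rcases hgap (c x) (Finset.mem_image_of_mem c hx) with hcx | hcx
          · rw [abs_of_nonneg (by linarith), abs_of_nonneg (by linarith),
              abs_of_nonneg (by linarith)]; ring
          · rw [abs_of_nonpos (by linarith), abs_of_nonpos (by linarith),
              abs_of_nonpos (by linarith)]; ring
        have hsum : (r - l) * ∑ x ∈ A, |s - c x| =
            (r - s) * (∑ x ∈ A, |l - c x|) + (s - l) * (∑ x ∈ A, |r - c x|) := by
          rw [Finset.mul_sum, Finset.mul_sum, Finset.mul_sum, ← Finset.sum_add_distrib]
          exact Finset.sum_congr rfl hterm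
        set Hl : ℝ := ∑ x ∈ A, |l - c x| with hHl
        set Hr : ℝ := ∑ x ∈ A, |r - c x| with hHr
        rcases le_total Hl Hr with hcase | hcase
        · obtain ⟨a, haA, hca⟩ := Finset.mem_image.mp hlS
          refine ⟨a, haA, ?_⟩
          have : ∑ x ∈ A, |c a - c x| = Hl := by rw [hca]
          rw [this]
          nlinarith [hsum]
        · obtain ⟨a, haA, hca⟩ := Finset.mem_image.mp hrS
          refine ⟨a, haA, ?_⟩
          have : ∑ x ∈ A, |c a - c x| = Hr := by rw [hca]
          rw [this]
          nlinarith [hsum]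

/-- The finite candidate set `T = {b − a : a ∈ A, b ∈ B}` contains an optimal
translation for the one-dimensional Chamfer distance under translation. -/
theorem candidate_set_contains_optimum (A B : Finset ℝ) (hA : A.Nonempty) (hB : B.Nonempty) :
    ∃ a ∈ A, ∃ b ∈ B, CD (shiftSet A (b - a)) B = CDuT A B := by
  classical
  have hBset : (B : Set ℝ).Nonempty := by exact_mod_cast hB
  have hBclosed : IsClosed (B : Set ℝ) := B.finite_toSet.isClosed
  set f : ℝ → ℝ := fun t => ∑ a ∈ A, Metric.infDist (a + t) (B : Set ℝ) with hf
  have hCD : ∀ t, CD (shiftSet A t) B = f t := by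
    intro t
    unfold CD shiftSet
    rw [Finset.sum_image (fun x _ y _ h => by linarith [add_right_cancel h])]
  -- candidate set
  set T : Finset ℝ := (A ×ˢ B).image (fun p => p.2 - p.1) with hT
  have hTne : T.Nonempty := (hA.product hB).image _
  obtain ⟨t₀, ht₀T, ht₀min⟩ := T.exists_min_image f hTne
  have hmin : ∀ t, f t₀ ≤ f t := by
    intro t
    choose nb hnbB hnb using fun a : ℝ =>
      hBclosed.exists_infDist_eq_dist hBset (a + t)
    set c : ℝ → ℝ := fun a => nb a - a with hc
    obtain ⟨a₀, ha₀A, hkey⟩ := median_exists A hA c t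
    have h1 : f t = ∑ x ∈ A, |t - c x| := by
      refine Finset.sum_congr rfl fun x hx => ?_
      rw [hnb, Real.dist_eq]
      congr 1
      simp only [hc]
      ring
    have h2 : f (c a₀) ≤ ∑ x ∈ A, |c a₀ - c x| := by
      refine Finset.sum_le_sum fun x hx => ?_
      calc Metric.infDist (x + c a₀) (B : Set ℝ)
          ≤ dist (x + c a₀) (nb x) := Metric.infDist_le_dist_of_mem (hnbB x)
        _ = |c a₀ - c x| := by
            rw [Real.dist_eq]
            congr 1
            simp only [hc]
            ring
    have h3 : c a₀ ∈ T := by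
      refine Finset.mem_image.mpr ⟨(a₀, nb a₀), Finset.mem_product.mpr ⟨ha₀A, hnbB a₀⟩, rfl⟩
    calc f t₀ ≤ f (c a₀) := ht₀min _ h3
      _ ≤ ∑ x ∈ A, |c a₀ - c x| := h2
      _ ≤ ∑ x ∈ A, |t - c x| := hkey
      _ = f t := h1.symm
  have hbdd : BddBelow (Set.range fun t => CD (shiftSet A t) B) := by
    refine ⟨0, fun y hy => ?_⟩
    obtain ⟨t, rfl⟩ := hy
    show 0 ≤ CD (shiftSet A t) B
    rw [hCD]
    exact Finset.sum_nonneg fun a _ => Metric.infDist_nonneg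
  have hinf : CDuT A B = f t₀ := by
    apply le_antisymm
    · have := ciInf_le hbdd t₀
      rwa [hCD] at this
    · refine le_ciInf fun t => ?_
      rw [hCD]
      exact hmin t
  obtain ⟨⟨a, b⟩, hab, heq⟩ := Finset.mem_image.mp ht₀T
  obtain ⟨haA, hbB⟩ := Finset.mem_product.mp hab
  exact ⟨a, haA, b, hbB, by rw [hCD, heq, hinf]⟩
end

section
/- Let A, B ⊂ ℝ be finite nonempty point sets with B = {b_1 < b_2 < … < b_n}, and let T_A := ⋃_{a∈A} ( {b_i − a : i ∈ [n]} ∪ {(b_{i+1}+b_i)/2 − a : i ∈ [n−1]} ). Then the function CDpT(t) := CD(A+t, B) is continuous on ℝ, and on every open interval I ⊂ ℝ with I ∩ T_A = ∅ the function CDpT is affine (i.e., it agrees with a function of the form t ↦ αt + β on I). -/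
open Finset
open scoped Classical

/-!
For a single point `a`, `t ↦ infDist (a + t) B` is `|a + t - b|` for the nearest point `b ∈ B`.
Moving `t` through an interval, the nearest point can only change from `b i` to a later one after
crossing the midpoint of `b i` and `b (i + 1)`, and `|a + t - b i|` can only change slope at
`t = b i - a`; away from these critical values each summand of `CD (A + t) B` is affine.
-/

lemma CD_shiftSet (A B : Finset ℝ) (t : ℝ) :
    CD (shiftSet A t) B = ∑ a ∈ A, Metric.infDist (a + t) (B : Set ℝ) :=
  Finset.sum_image fun _ _ _ _ h => add_right_cancel h

lemma le_midpoint_of_abs_sub_le {x c d : ℝ} (hcd : c < d) (h : |x - c| ≤ |x - d|) :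
    x ≤ (d + c) / 2 := by
  rcases abs_cases (x - c) with ⟨h₁, h₁'⟩ | ⟨h₁, h₁'⟩ <;>
    rcases abs_cases (x - d) with ⟨h₂, h₂'⟩ | ⟨h₂, h₂'⟩ <;> linarith

lemma midpoint_le_of_abs_sub_le {x c d : ℝ} (hcd : c < d) (h : |x - d| ≤ |x - c|) :
    (d + c) / 2 ≤ x := by
  rcases abs_cases (x - c) with ⟨h₁, h₁'⟩ | ⟨h₁, h₁'⟩ <;>
    rcases abs_cases (x - d) with ⟨h₂, h₂'⟩ | ⟨h₂, h₂'⟩ <;> linarith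

lemma exists_infDist_range_eq_abs {ι : Type*} [Finite ι] [Nonempty ι] (b : ι → ℝ) (x : ℝ) :
    ∃ i, Metric.infDist x (Set.range b) = |x - b i| := by
  obtain ⟨_, ⟨i, rfl⟩, hi⟩ :=
    (Set.finite_range b).isCompact.exists_infDist_eq_dist (Set.range_nonempty b) x
  exact ⟨i, hi⟩

section NearestPoint

variable {n : ℕ} {b : Fin n → ℝ}

lemma abs_sub_le_of_infDist_eq (x : ℝ) {i : Fin n}
    (hi : Metric.infDist x (Set.range b) = |x - b i|) (k : Fin n) : |x - b i| ≤ |x - b k| :=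
  hi ▸ Real.dist_eq x (b k) ▸ Metric.infDist_le_dist_of_mem (Set.mem_range_self k)

lemma exists_midpoint_mem_Icc_of_nearest_lt (hb : StrictMono b) {x y : ℝ} {i j : Fin n}
    (hij : i < j) (hx : Metric.infDist x (Set.range b) = |x - b i|)
    (hy : Metric.infDist y (Set.range b) = |y - b j|) :
    ∃ k : Fin n, (k : ℕ) = i + 1 ∧ (b k + b i) / 2 ∈ Set.Icc x y := by
  have hi : (i : ℕ) + 1 < n := lt_of_le_of_lt (Nat.succ_le_of_lt hij) j.isLt
  set k : Fin n := ⟨i + 1, hi⟩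
  have hik : i < k := Fin.mk_lt_mk.mpr (Nat.lt_succ_self i)
  have hkj : k ≤ j := Fin.mk_le_mk.mpr (Nat.succ_le_of_lt hij)
  have hxk := le_midpoint_of_abs_sub_le (hb hik) (abs_sub_le_of_infDist_eq x hx k)
  have hyi := midpoint_le_of_abs_sub_le (hb hij) (abs_sub_le_of_infDist_eq y hy i)
  exact ⟨k, rfl, hxk, by linarith [hb.monotone hkj]⟩

variable {J : Set ℝ}

lemma infDist_eq_abs_of_ordConnected (hb : StrictMono b) (hJ : J.OrdConnected)
    (hmid : ∀ i j : Fin n, (j : ℕ) = i + 1 → (b j + b i) / 2 ∉ J) {x y : ℝ} (hx : x ∈ J)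
    (hy : y ∈ J) {i : Fin n} (hi : Metric.infDist x (Set.range b) = |x - b i|) :
    Metric.infDist y (Set.range b) = |y - b i| := by
  have : Nonempty (Fin n) := ⟨i⟩
  obtain ⟨j, hj⟩ := exists_infDist_range_eq_abs b y
  rcases lt_trichotomy i j with hij | rfl | hji
  · obtain ⟨k, hk, hmem⟩ := exists_midpoint_mem_Icc_of_nearest_lt hb hij hi hj
    exact absurd (hJ.out hx hy hmem) (hmid i k hk)
  · exact hj
  · obtain ⟨k, hk, hmem⟩ := exists_midpoint_mem_Icc_of_nearest_lt hb hji hj hi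
    exact absurd (hJ.out hy hx hmem) (hmid j k hk)

lemma exists_abs_sub_eq_affine_of_ordConnected (hJ : J.OrdConnected) {c : ℝ} (hc : c ∉ J) :
    ∃ α β : ℝ, ∀ x ∈ J, |x - c| = α * x + β := by
  by_cases hlt : ∀ x ∈ J, x < c
  · exact ⟨-1, c, fun x hx => by rw [abs_of_neg (sub_neg.mpr (hlt x hx))]; ring⟩
  push Not at hlt
  obtain ⟨x₀, hx₀, hcx₀⟩ := hlt
  refine ⟨1, -c, fun x hx => ?_⟩
  have hcx : c < x := lt_of_not_ge fun hxc => hc (hJ.out hx hx₀ ⟨hxc, hcx₀⟩)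
  rw [abs_of_pos (sub_pos.mpr hcx)]
  ring

lemma exists_infDist_eq_affine_of_ordConnected (hb : StrictMono b) (hJ : J.OrdConnected)
    (hpt : ∀ i, b i ∉ J) (hmid : ∀ i j : Fin n, (j : ℕ) = i + 1 → (b j + b i) / 2 ∉ J) :
    ∃ α β : ℝ, ∀ x ∈ J, Metric.infDist x (Set.range b) = α * x + β := by
  rcases isEmpty_or_nonempty (Fin n) with hn | hn
  · exact ⟨0, 0, fun x _ => by simp [Set.range_eq_empty, Metric.infDist_empty]⟩
  rcases J.eq_empty_or_nonempty with rfl | ⟨x₀, hx₀⟩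
  · exact ⟨0, 0, fun _ hx => hx.elim⟩
  obtain ⟨i, hi⟩ := exists_infDist_range_eq_abs b x₀
  obtain ⟨α, β, hαβ⟩ := exists_abs_sub_eq_affine_of_ordConnected hJ (hpt i)
  exact ⟨α, β, fun x hx => (infDist_eq_abs_of_ordConnected hb hJ hmid hx₀ hx hi).trans
    (hαβ x hx)⟩

end NearestPoint

theorem cdpt_continuous_piecewise_affine_general (A : Finset ℝ)
    (n : ℕ) (b : Fin n → ℝ) (hb : StrictMono b)
    (B : Finset ℝ) (hB : B = Finset.image b Finset.univ)
    (T_A : Set ℝ)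
    (hT : T_A = {t : ℝ | ∃ a ∈ A, (∃ i : Fin n, t = b i - a) ∨
      (∃ i j : Fin n, (j : ℕ) = (i : ℕ) + 1 ∧ t = (b j + b i) / 2 - a)}) :
    Continuous (fun t : ℝ => CD (shiftSet A t) B) ∧
    ∀ I : Set ℝ, IsOpen I → I.OrdConnected → I ∩ T_A = ∅ →
      ∃ α β : ℝ, ∀ t ∈ I, CD (shiftSet A t) B = α * t + β := by
  have hBb : (B : Set ℝ) = Set.range b := by simp [hB]
  simp only [CD_shiftSet, hBb]
  refine ⟨continuous_finsetSum _ fun a _ =>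
    (Metric.continuous_infDist_pt _).comp (continuous_const.add continuous_id), ?_⟩
  intro I _ hI hIT
  have hI_noncritical : ∀ t ∈ I, t ∉ T_A := fun t ht htT =>
    (Set.eq_empty_iff_forall_notMem.mp hIT) t ⟨ht, htT⟩
  have hsummand_affine : ∀ a ∈ A, ∃ α β : ℝ, ∀ t ∈ I,
      Metric.infDist (a + t) (Set.range b) = α * t + β := by
    intro a ha
    obtain ⟨α, β, hαβ⟩ := exists_infDist_eq_affine_of_ordConnected (J := (· - a) ⁻¹' I) hb
      (hI.preimage_mono fun _ _ h => sub_le_sub_right h a)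
      (fun i hi => hI_noncritical _ hi (hT ▸ ⟨a, ha, Or.inl ⟨i, rfl⟩⟩))
      (fun i j hij hi => hI_noncritical _ hi (hT ▸ ⟨a, ha, Or.inr ⟨i, j, hij, rfl⟩⟩))
    exact ⟨α, α * a + β, fun t ht => by
      rw [hαβ (a + t) (by simpa using ht)]; ring⟩
  choose! α β hαβ using hsummand_affine
  refine ⟨∑ a ∈ A, α a, ∑ a ∈ A, β a, fun t ht => ?_⟩
  rw [Finset.sum_congr rfl fun a ha => hαβ a ha t ht, Finset.sum_add_distrib, Finset.sum_mul]

/-- `CDpT(t) := CD(A+t,B)` is continuous on `ℝ`, and affine on every open interval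
disjoint from the critical set `T_A`. -/
theorem cdpt_continuous_piecewise_affine (A : Finset ℝ) (hA : A.Nonempty)
    (n : ℕ) (hn : 0 < n) (b : Fin n → ℝ) (hb : StrictMono b)
    (B : Finset ℝ) (hB : B = Finset.image b Finset.univ)
    (T_A : Set ℝ)
    (hT : T_A = {t : ℝ | ∃ a ∈ A, (∃ i : Fin n, t = b i - a) ∨
      (∃ i j : Fin n, (j : ℕ) = (i : ℕ) + 1 ∧ t = (b j + b i) / 2 - a)}) :
    Continuous (fun t : ℝ => CD (shiftSet A t) B) ∧
    ∀ I : Set ℝ, IsOpen I → I.OrdConnected → I ∩ T_A = ∅ →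
      ∃ α β : ℝ, ∀ t ∈ I, CD (shiftSet A t) B = α * t + β :=
  cdpt_continuous_piecewise_affine_general A n b hb B hB T_A hT
end

section
/- Let d ≥ 1 and x, y ∈ {0,1}^d with x · y = 0 (orthogonal vectors). Then CDuT(A(x), B(y)) = 0, where A(x), B(y) ⊂ ℝ are the vector-gadget point sets. In fact CD(A(x), B(y)) = 0 at translation t = 0, since A(x) ⊆ B(y). -/
open Finset
open scoped Classical

/-- The vector gadget `A(x) ⊂ ℝ` for `x ∈ {0,1}^d`: the points `0` and `4d+1`,
together with, for each coordinate `k = i+1 ∈ {1,…,d}`, the points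
`{4k−2, 4k−1}` if `x_k = 0` and `{4k−3, 4k}` if `x_k = 1`. -/
noncomputable def gadgetA (d : ℕ) (x : Fin d → Bool) : Finset ℝ :=
  ({0, 4 * (d : ℝ) + 1} : Finset ℝ) ∪
    Finset.univ.biUnion (fun i : Fin d =>
      if x i then ({4 * (i : ℝ) + 1, 4 * (i : ℝ) + 4} : Finset ℝ)
      else ({4 * (i : ℝ) + 2, 4 * (i : ℝ) + 3} : Finset ℝ))

/-- The vector gadget `B(y) ⊂ ℝ` for `y ∈ {0,1}^d`: the points `0` and `4d+1`,
together with, for each coordinate `k = i+1 ∈ {1,…,d}`, the points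
`{4k−3, 4k−2, 4k−1, 4k}` if `y_k = 0` and `{4k−2, 4k−1}` if `y_k = 1`. -/
noncomputable def gadgetB (d : ℕ) (y : Fin d → Bool) : Finset ℝ :=
  ({0, 4 * (d : ℝ) + 1} : Finset ℝ) ∪
    Finset.univ.biUnion (fun i : Fin d =>
      if y i then ({4 * (i : ℝ) + 2, 4 * (i : ℝ) + 3} : Finset ℝ)
      else ({4 * (i : ℝ) + 1, 4 * (i : ℝ) + 2, 4 * (i : ℝ) + 3, 4 * (i : ℝ) + 4} : Finset ℝ))

/-- If `x` and `y` are orthogonal, then `CDuT(A(x),B(y)) = 0`; in fact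
`A(x) ⊆ B(y)`, so already `CD(A(x),B(y)) = 0` at translation `t = 0`. -/
theorem orthogonal_gadgets_cdut_zero (d : ℕ) (hd : 1 ≤ d) (x y : Fin d → Bool)
    (horth : ∀ i : Fin d, ¬(x i = true ∧ y i = true)) :
    CDuT (gadgetA d x) (gadgetB d y) = 0 ∧
    gadgetA d x ⊆ gadgetB d y ∧
    CD (gadgetA d x) (gadgetB d y) = 0 := by

  have hsub : gadgetA d x ⊆ gadgetB d y := by
    intro a ha
    simp only [gadgetA, gadgetB, Finset.mem_union, Finset.mem_biUnion, Finset.mem_univ,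
      true_and, Finset.mem_insert, Finset.mem_singleton] at ha ⊢
    rcases ha with h | ⟨i, hi⟩
    · exact Or.inl h
    · refine Or.inr ⟨i, ?_⟩
      cases hx : x i with
      | false =>
        simp [hx] at hi
        cases hy : y i <;> simp [hy] <;> tauto
      | true =>
        have hyi : y i = false := by
          cases hy : y i
          · rfl
          · exact absurd ⟨hx, hy⟩ (horth i)
        simp [hx] at hi
        simp [hyi]; tauto
  have hCD : CD (gadgetA d x) (gadgetB d y) = 0 := by
    apply Finset.sum_eq_zero
    intro a ha
    exact Metric.infDist_zero_of_mem (by exact_mod_cast hsub ha)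
  refine ⟨?_, hsub, hCD⟩
  have hnonneg : ∀ t : ℝ, 0 ≤ CD (shiftSet (gadgetA d x) t) (gadgetB d y) := fun t =>
    Finset.sum_nonneg fun a _ => Metric.infDist_nonneg
  have hbdd : BddBelow (Set.range fun t : ℝ => CD (shiftSet (gadgetA d x) t) (gadgetB d y)) :=
    ⟨0, Set.forall_mem_range.2 hnonneg⟩
  have h0 : shiftSet (gadgetA d x) 0 = gadgetA d x := by simp [shiftSet]
  refine le_antisymm ?_ (le_ciInf hnonneg)
  calc CDuT (gadgetA d x) (gadgetB d y) ≤ CD (shiftSet (gadgetA d x) 0) (gadgetB d y) :=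
        ciInf_le hbdd 0
    _ = 0 := by rw [h0, hCD]
end

section
/- Let d ≥ 1 and x, y ∈ {0,1}^d with x · y ≠ 0 (not orthogonal). Then for every translation t ∈ ℝ, CD(A(x) + t, B(y)) ≥ max{1, |t|}, where A(x), B(y) ⊂ ℝ are the vector-gadget point sets. -/
open Finset
open scoped Classical

section Aux

open Metric

lemma my_le_infDist {s : Set ℝ} (hs : s.Nonempty) {x c : ℝ}
    (h : ∀ y ∈ s, c ≤ dist x y) : c ≤ Metric.infDist x s := by
  by_contra hc
  push_neg at hc
  obtain ⟨y, hy, hlt⟩ := (Metric.infDist_lt_iff hs).mp hc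
  exact absurd (h y hy) (not_le.mpr hlt)

lemma memB_cases {d : ℕ} {y : Fin d → Bool} {b : ℝ} (hb : b ∈ gadgetB d y) :
    b = 0 ∨ b = 4 * (d : ℝ) + 1 ∨
      ∃ j : Fin d, (4 * (j : ℝ) + 1 ≤ b ∧ b ≤ 4 * (j : ℝ) + 4) ∧
        (y j = true → b = 4 * (j : ℝ) + 2 ∨ b = 4 * (j : ℝ) + 3) := by
  simp only [gadgetB, Finset.mem_union, Finset.mem_insert, Finset.mem_singleton,
    Finset.mem_biUnion, Finset.mem_univ, true_and] at hb
  rcases hb with (h | h) | ⟨j, hj⟩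
  · exact Or.inl h
  · exact Or.inr (Or.inl h)
  · refine Or.inr (Or.inr ⟨j, ?_⟩)
    by_cases hyj : y j = true
    · rw [if_pos hyj] at hj
      simp only [Finset.mem_insert, Finset.mem_singleton] at hj
      rcases hj with h | h <;> subst h <;>
        exact ⟨⟨by linarith, by linarith⟩, fun _ => by tauto⟩
    · rw [if_neg hyj] at hj
      simp only [Finset.mem_insert, Finset.mem_singleton] at hj
      refine ⟨?_, fun h => absurd h hyj⟩
      rcases hj with h | h | h | h <;> subst h <;> constructor <;> linarith

end Aux

/-- If `x` and `y` are not orthogonal, then for every translation `t`,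
`CD(A(x)+t, B(y)) ≥ max{1, |t|}`. -/
theorem nonorthogonal_gadgets_lower_bound (d : ℕ) (hd : 1 ≤ d) (x y : Fin d → Bool)
    (hnot : ∃ i : Fin d, x i = true ∧ y i = true) :
    ∀ t : ℝ, max 1 |t| ≤ CD (shiftSet (gadgetA d x) t) (gadgetB d y) := by
  intro t
  obtain ⟨i, hxi, hyi⟩ := hnot
  set c : ℝ := ((i : ℕ) : ℝ) with hc
  have hc0 : 0 ≤ c := Nat.cast_nonneg _
  have hc1 : c + 1 ≤ (d : ℝ) := by
    have := i.isLt
    have : ((i : ℕ) : ℝ) + 1 ≤ (d : ℝ) := by exact_mod_cast this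
    linarith
  have hd1 : (1 : ℝ) ≤ (d : ℝ) := by exact_mod_cast hd
  set B : Finset ℝ := gadgetB d y with hB
  have hBne : ((B : Set ℝ)).Nonempty := ⟨0, by simp [hB, gadgetB]⟩
  -- bounds for every b ∈ B
  have hjbound : ∀ j : Fin d, ((j : ℕ) : ℝ) + 1 ≤ (d : ℝ) := by
    intro j
    exact_mod_cast j.isLt
  have hgap1 : ∀ b ∈ (B : Set ℝ), b ≤ 4 * c ∨ 4 * c + 2 ≤ b := by
    intro b hb
    rcases memB_cases hb with h | h | ⟨j, ⟨hlo, hhi⟩, hyj⟩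
    · exact Or.inl (by rw [h]; linarith)
    · exact Or.inr (by rw [h]; linarith)
    · by_cases hji : j = i
      · subst hji
        rcases hyj hyi with h | h <;> rw [h] <;> [exact Or.inr (by linarith); exact Or.inr (by linarith)]
      · have hne : (j : ℕ) ≠ (i : ℕ) := fun h => hji (Fin.ext h)
        rcases lt_or_gt_of_ne hne with hlt | hgt
        · have : ((j : ℕ) : ℝ) + 1 ≤ c := by rw [hc]; exact_mod_cast hlt
          exact Or.inl (by linarith)
        · have : c + 1 ≤ ((j : ℕ) : ℝ) := by rw [hc]; exact_mod_cast hgt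
          exact Or.inr (by linarith)
  have hgap2 : ∀ b ∈ (B : Set ℝ), b ≤ 4 * c + 3 ∨ 4 * c + 5 ≤ b := by
    intro b hb
    rcases memB_cases hb with h | h | ⟨j, ⟨hlo, hhi⟩, hyj⟩
    · exact Or.inl (by rw [h]; linarith)
    · exact Or.inr (by rw [h]; linarith)
    · by_cases hji : j = i
      · subst hji
        rcases hyj hyi with h | h <;> rw [h] <;> [exact Or.inl (by linarith); exact Or.inl (by linarith)]
      · have hne : (j : ℕ) ≠ (i : ℕ) := fun h => hji (Fin.ext h)
        rcases lt_or_gt_of_ne hne with hlt | hgt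
        · have : ((j : ℕ) : ℝ) + 1 ≤ c := by rw [hc]; exact_mod_cast hlt
          exact Or.inl (by linarith)
        · have : c + 1 ≤ ((j : ℕ) : ℝ) := by rw [hc]; exact_mod_cast hgt
          exact Or.inr (by linarith)
  have hBnn : ∀ b ∈ (B : Set ℝ), 0 ≤ b := by
    intro b hb
    rcases memB_cases hb with h | h | ⟨j, ⟨hlo, hhi⟩, _⟩
    · rw [h]
    · rw [h]; linarith
    · have := hjbound j; linarith [Nat.cast_nonneg (α := ℝ) (j : ℕ)]
  have hBub : ∀ b ∈ (B : Set ℝ), b ≤ 4 * (d : ℝ) + 1 := by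
    intro b hb
    rcases memB_cases hb with h | h | ⟨j, ⟨hlo, hhi⟩, _⟩
    · rw [h]; linarith
    · rw [h]
    · have := hjbound j; linarith
  -- infDist lower bounds for the four chosen points
  have h1 : -t ≤ Metric.infDist t (B : Set ℝ) := by
    apply my_le_infDist hBne
    intro b hb
    rw [Real.dist_eq]
    have := hBnn b hb
    have := neg_abs_le (t - b)
    linarith
  have h2 : t ≤ Metric.infDist (4 * (d : ℝ) + 1 + t) (B : Set ℝ) := by
    apply my_le_infDist hBne
    intro b hb
    rw [Real.dist_eq]
    have := hBub b hb
    have := le_abs_self (4 * (d : ℝ) + 1 + t - b)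
    linarith
  have h3 : 1 - |t| ≤ Metric.infDist (4 * c + 1 + t) (B : Set ℝ) := by
    apply my_le_infDist hBne
    intro b hb
    rw [Real.dist_eq]
    have ht1 := le_abs_self t
    have ht2 := neg_abs_le t
    rcases hgap1 b hb with h | h
    · have := le_abs_self (4 * c + 1 + t - b); linarith
    · have := neg_abs_le (4 * c + 1 + t - b); linarith
  have h4 : 1 - |t| ≤ Metric.infDist (4 * c + 4 + t) (B : Set ℝ) := by
    apply my_le_infDist hBne
    intro b hb
    rw [Real.dist_eq]
    have ht1 := le_abs_self t
    have ht2 := neg_abs_le t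
    rcases hgap2 b hb with h | h
    · have := le_abs_self (4 * c + 4 + t - b); linarith
    · have := neg_abs_le (4 * c + 4 + t - b); linarith
  have hn1 : 0 ≤ Metric.infDist t (B : Set ℝ) := Metric.infDist_nonneg
  have hn2 : 0 ≤ Metric.infDist (4 * (d : ℝ) + 1 + t) (B : Set ℝ) := Metric.infDist_nonneg
  have hn3 : 0 ≤ Metric.infDist (4 * c + 1 + t) (B : Set ℝ) := Metric.infDist_nonneg
  have hn4 : 0 ≤ Metric.infDist (4 * c + 4 + t) (B : Set ℝ) := Metric.infDist_nonneg
  -- the four points belong to the shifted gadget A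
  have hA0 : (0 : ℝ) ∈ gadgetA d x := by
    simp [gadgetA]
  have hAtop : 4 * (d : ℝ) + 1 ∈ gadgetA d x := by
    simp [gadgetA]
  have hA1 : 4 * c + 1 ∈ gadgetA d x := by
    refine Finset.mem_union.mpr (Or.inr (Finset.mem_biUnion.mpr ⟨i, Finset.mem_univ i, ?_⟩))
    simp [hxi, hc]
  have hA4 : 4 * c + 4 ∈ gadgetA d x := by
    refine Finset.mem_union.mpr (Or.inr (Finset.mem_biUnion.mpr ⟨i, Finset.mem_univ i, ?_⟩))
    simp [hxi, hc]
  set S : Finset ℝ := {t, 4 * c + 1 + t, 4 * c + 4 + t, 4 * (d : ℝ) + 1 + t} with hS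
  have hsub : S ⊆ shiftSet (gadgetA d x) t := by
    intro a ha
    simp only [hS, Finset.mem_insert, Finset.mem_singleton] at ha
    simp only [shiftSet, Finset.mem_image]
    rcases ha with h | h | h | h
    · exact ⟨0, hA0, by rw [h]; ring⟩
    · exact ⟨4 * c + 1, hA1, by rw [h]⟩
    · exact ⟨4 * c + 4, hA4, by rw [h]⟩
    · exact ⟨4 * (d : ℝ) + 1, hAtop, by rw [h]⟩
  have hsum : ∑ a ∈ S, Metric.infDist a (B : Set ℝ) =
      Metric.infDist t (B : Set ℝ) + (Metric.infDist (4 * c + 1 + t) (B : Set ℝ) +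
        (Metric.infDist (4 * c + 4 + t) (B : Set ℝ) +
          Metric.infDist (4 * (d : ℝ) + 1 + t) (B : Set ℝ))) := by
    rw [hS]
    rw [Finset.sum_insert (by
      simp only [Finset.mem_insert, Finset.mem_singleton]
      push_neg
      refine ⟨by intro h; linarith, by intro h; linarith, by intro h; linarith⟩)]
    rw [Finset.sum_insert (by
      simp only [Finset.mem_insert, Finset.mem_singleton]
      push_neg
      refine ⟨by intro h; linarith, by intro h; linarith⟩)]
    rw [Finset.sum_insert (by
      simp only [Finset.mem_singleton]
      intro h; linarith)]
    rw [Finset.sum_singleton]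
  have hle : ∑ a ∈ S, Metric.infDist a (B : Set ℝ) ≤ CD (shiftSet (gadgetA d x) t) B := by
    apply Finset.sum_le_sum_of_subset_of_nonneg hsub
    intro a _ _
    exact Metric.infDist_nonneg
  rw [hsum] at hle
  rcases le_total |t| 1 with h | h
  · have habs := abs_nonneg t
    apply max_le
    · rcases abs_cases t with ⟨ht, _⟩ | ⟨ht, _⟩ <;> linarith
    · rcases abs_cases t with ⟨ht, _⟩ | ⟨ht, _⟩ <;> linarith
  · apply max_le
    · rcases abs_cases t with ⟨ht, _⟩ | ⟨ht, _⟩ <;> linarith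
    · rcases abs_cases t with ⟨ht, _⟩ | ⟨ht, _⟩ <;> linarith
end
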